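/- (Corollary 1.7(i)) Suppose 𝒵₀ = {ς_i, −ς_i, 2ς_i, −2ς_i : i = 1, …, d} and that c_j = 0 for all j = 1, …, 𝕜 − 1 (i.e. each flux component is the monomial A_i(u) = c_{i,𝕜} u^𝕜). Then the Hörmander-type condition (Condition 1.1) holds: ℤ^d \ 𝒵_∞ ⊆ A^⊥, where here A^⊥ = {k ∈ ℤ^d : ⟨c_𝕜, k⟩ = 0}. -/
import Mathlib


open scoped BigOperators

/-- Euclidean pairing `⟨c, k⟩ = ∑ i, c i * k i` between a real vector and an
integer vector. -/
noncomputable def pairing {d : ℕ} (c : Fin d → ℝ) (k : Fin d → ℤ) : ℝ :=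
  ∑ i, c i * (k i : ℝ)

/-- `A^⊥ = {k ∈ ℤ^d : ⟨c_j, k⟩ = 0 for all j = 1, …, 𝕜}`. -/
def Aperp {d : ℕ} (kk : ℕ) (c : ℕ → Fin d → ℝ) : Set (Fin d → ℤ) :=
  {k | ∀ j : ℕ, 1 ≤ j → j ≤ kk → pairing (c j) k = 0}

/-- The set `𝕃` of sums of exactly `kk - 1` elements of `Z0`. -/
def Lset {d : ℕ} (kk : ℕ) (Z0 : Set (Fin d → ℤ)) : Set (Fin d → ℤ) :=
  {l | ∃ f : Fin (kk - 1) → (Fin d → ℤ), (∀ i, f i ∈ Z0) ∧ l = ∑ i, f i}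

/-- The recursively defined sets `𝒵ₙ`. -/
def Zn {d : ℕ} (kk : ℕ) (ck : Fin d → ℝ) (Z0 : Set (Fin d → ℤ)) :
    ℕ → Set (Fin d → ℤ)
  | 0 => Z0
  | n + 1 =>
      {x | ∃ κ ∈ Zn kk ck Z0 n, ∃ l ∈ Lset kk Z0, x = κ + l ∧ pairing ck x ≠ 0}

/-- `𝒵_∞ = ⋃ n, 𝒵ₙ`. -/
def Zinf {d : ℕ} (kk : ℕ) (ck : Fin d → ℝ) (Z0 : Set (Fin d → ℤ)) :
    Set (Fin d → ℤ) :=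
  ⋃ n : ℕ, Zn kk ck Z0 n

/-- The standard noise set `𝒵₀ = {ς_i, −ς_i, 2ς_i, −2ς_i : i = 1, …, d}`,
where `ς_i` is the `i`-th standard basis vector. -/
def stdZ0 (d : ℕ) : Set (Fin d → ℤ) :=
  {k | ∃ i : Fin d,
    k = Pi.single i 1 ∨ k = -Pi.single i 1 ∨ k = Pi.single i 2 ∨ k = -Pi.single i 2}

lemma pairing_add_single {d : ℕ} (c : Fin d → ℝ) (k : Fin d → ℤ) (i : Fin d) (t : ℤ) :
    pairing c (k + (Pi.single i t : Fin d → ℤ)) = pairing c k + c i * t := by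
  have h : ∀ j, c j * (((k + (Pi.single i t : Fin d → ℤ)) j : ℤ) : ℝ)
      = c j * (k j : ℝ) + c j * (((Pi.single i t : Fin d → ℤ) j : ℤ) : ℝ) := by
    intro j; push_cast [Pi.add_apply]; ring
  simp_rw [pairing, h, Finset.sum_add_distrib]
  congr 1
  rw [Finset.sum_eq_single i]
  · simp
  · intro j _ hj; simp [Pi.single_eq_of_ne hj]
  · simp

lemma Nm_sub_single {d : ℕ} (k : Fin d → ℤ) (i : Fin d) (t : ℤ) :
    (∑ j, ((k - (Pi.single i t : Fin d → ℤ)) j).natAbs) + (k i).natAbs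
      = (∑ j, (k j).natAbs) + (k i - t).natAbs := by
  rw [← Finset.add_sum_erase _ (fun j => ((k - (Pi.single i t : Fin d → ℤ)) j).natAbs) (Finset.mem_univ i),
      ← Finset.add_sum_erase _ (fun j => (k j).natAbs) (Finset.mem_univ i)]
  have : ∀ j ∈ Finset.univ.erase i, ((k - (Pi.single i t : Fin d → ℤ)) j).natAbs = (k j).natAbs := by
    intro j hj
    have hne : j ≠ i := Finset.ne_of_mem_erase hj
    simp [Pi.sub_apply, Pi.single_eq_of_ne hne]
  rw [Finset.sum_congr rfl this]
  simp [Pi.sub_apply]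
  ring

def S (t : ℤ) : Prop := t = 1 ∨ t = -1 ∨ t = 2 ∨ t = -2

lemma single_mem_stdZ0 {d : ℕ} (i : Fin d) {t : ℤ} (ht : S t) :
    (Pi.single i t : Fin d → ℤ) ∈ stdZ0 d := by
  refine ⟨i, ?_⟩
  rcases ht with h | h | h | h <;> subst h
  · left; rfl
  · right; left; ext j; simp [Pi.single_apply]; split <;> simp
  · right; right; left; rfl
  · right; right; right; ext j; simp [Pi.single_apply]; split <;> simp

lemma sum_g : ∀ m : ℕ, 1 ≤ m → ∀ t : ℤ, S t →
    ∃ g : Fin m → ℤ, (∀ j, S (g j)) ∧ ∑ j, g j = t := by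
  intro m
  induction m with
  | zero => omega
  | succ n ih =>
    intro _ t ht
    rcases Nat.eq_zero_or_pos n with hn | hn
    · subst hn
      exact ⟨fun _ => t, fun _ => ht, by simp⟩
    · have hsx : ∃ s x : ℤ, S s ∧ S x ∧ x + s = t := by
        rcases ht with h | h | h | h <;> subst h
        · exact ⟨-1, 2, Or.inr (Or.inl rfl), Or.inr (Or.inr (Or.inl rfl)), by ring⟩
        · exact ⟨1, -2, Or.inl rfl, Or.inr (Or.inr (Or.inr rfl)), by ring⟩
        · exact ⟨1, 1, Or.inl rfl, Or.inl rfl, by ring⟩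
        · exact ⟨-1, -1, Or.inr (Or.inl rfl), Or.inr (Or.inl rfl), by ring⟩
      obtain ⟨s, x, hs, hx, hxs⟩ := hsx
      obtain ⟨g, hg, hgs⟩ := ih hn s hs
      refine ⟨Fin.cons x g, ?_, ?_⟩
      · intro j
        refine Fin.cases ?_ ?_ j <;> simp [hx, hg]
      · rw [Fin.sum_cons, hgs, hxs]

lemma single_mem_L {d kk : ℕ} (hk : 2 ≤ kk) (i : Fin d) {t : ℤ} (ht : S t) :
    (Pi.single i t : Fin d → ℤ) ∈ Lset kk (stdZ0 d) := by
  obtain ⟨g, hg, hgs⟩ := sum_g (kk - 1) (by omega) t ht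
  refine ⟨fun j => Pi.single i (g j), fun j => single_mem_stdZ0 i (hg j), ?_⟩
  ext x
  rw [Finset.sum_apply]
  by_cases hx : x = i
  · subst hx; simp [← hgs]
  · simp [Pi.single_eq_of_ne hx]

lemma Zinf_step {d kk : ℕ} {c : Fin d → ℝ} {Z0 : Set (Fin d → ℤ)}
    {κ l : Fin d → ℤ} (hκ : κ ∈ Zinf kk c Z0) (hl : l ∈ Lset kk Z0)
    (hp : pairing c (κ + l) ≠ 0) : κ + l ∈ Zinf kk c Z0 := by
  obtain ⟨n, hn⟩ := Set.mem_iUnion.mp hκ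
  exact Set.mem_iUnion.mpr ⟨n + 1, κ, hn, l, hl, rfl, hp⟩

lemma main_lemma {d kk : ℕ} (hk : 2 ≤ kk) (c : Fin d → ℝ) :
    ∀ N : ℕ, ∀ k : Fin d → ℤ, (∑ j, (k j).natAbs) = N → pairing c k ≠ 0 →
      k ∈ Zinf kk c (stdZ0 d) := by
  intro N
  induction N using Nat.strong_induction_on with
  | _ N IH =>
    intro k hN hp
    have hk0 : ∃ i, k i ≠ 0 := by
      by_contra h; push_neg at h
      exact hp (by simp [pairing, h])
    obtain ⟨i, hki⟩ := hk0
    set σ : ℤ := if 0 < k i then 1 else -1 with hσ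
    have hcase : (σ = 1 ∧ 0 < k i) ∨ (σ = -1 ∧ k i < 0) := by
      rcases lt_or_gt_of_ne hki with h | h
      · right; exact ⟨if_neg (by omega), h⟩
      · left; exact ⟨if_pos h, h⟩
    have hσS : S σ := by
      rcases hcase with ⟨h1, _⟩ | ⟨h1, _⟩
      · exact Or.inl h1
      · exact Or.inr (Or.inl h1)
    have h2σS : S (2 * σ) := by
      rcases hcase with ⟨h1, _⟩ | ⟨h1, _⟩
      · exact Or.inr (Or.inr (Or.inl (by omega)))
      · exact Or.inr (Or.inr (Or.inr (by omega)))
    have hile : (k i).natAbs ≤ N := by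
      rw [← hN]
      exact Finset.single_le_sum (f := fun j => (k j).natAbs)
        (fun _ _ => Nat.zero_le _) (Finset.mem_univ i)
    have hige : 1 ≤ (k i).natAbs := by
      rcases hcase with ⟨_, h2⟩ | ⟨_, h2⟩ <;> omega
    set κ1 : Fin d → ℤ := k - Pi.single i σ with hκ1
    have hk1 : k = κ1 + (Pi.single i σ : Fin d → ℤ) := by
      rw [hκ1]; ring
    have hpk : pairing c k = pairing c κ1 + c i * σ := by
      have h := pairing_add_single c κ1 i σ
      rw [← hk1] at h; exact h
    have hN1 : (∑ j, (κ1 j).natAbs) + (k i).natAbs = N + (k i - σ).natAbs :=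
      hN ▸ Nm_sub_single k i σ
    have habs1 : (k i - σ).natAbs = (k i).natAbs - 1 := by
      rcases hcase with ⟨h1, h2⟩ | ⟨h1, h2⟩ <;> omega
    by_cases hA : pairing c κ1 = 0
    · -- stuck at i : c i * σ = pairing c k ≠ 0
      have hciσ : c i * σ = pairing c k := by rw [hpk, hA]; ring
      by_cases hB : 2 ≤ (k i).natAbs
      · -- jump by 2σ
        set κ2 : Fin d → ℤ := k - Pi.single i (2 * σ) with hκ2
        have hk2 : k = κ2 + (Pi.single i (2 * σ) : Fin d → ℤ) := by rw [hκ2]; ring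
        have hp2 : pairing c κ2 = - pairing c k := by
          have h := pairing_add_single c κ2 i (2 * σ)
          rw [← hk2] at h
          push_cast at h
          nlinarith [hciσ, h]
        have hN2 : (∑ j, (κ2 j).natAbs) + (k i).natAbs = N + (k i - 2 * σ).natAbs :=
          hN ▸ Nm_sub_single k i (2 * σ)
        have habs2 : (k i - 2 * σ).natAbs = (k i).natAbs - 2 := by
          rcases hcase with ⟨h1, h2⟩ | ⟨h1, h2⟩ <;> omega
        have hκ2mem : κ2 ∈ Zinf kk c (stdZ0 d) :=
          IH (∑ j, (κ2 j).natAbs) (by omega) κ2 rfl (by rw [hp2]; simpa using hp)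
        rw [hk2]
        exact Zinf_step hκ2mem (single_mem_L hk i h2σS) (by rw [← hk2]; exact hp)
      · -- |k i| = 1, so k i = σ
        have hkiσ : k i = σ := by
          rcases hcase with ⟨h1, h2⟩ | ⟨h1, h2⟩ <;> omega
        by_cases hC : κ1 = 0
        · -- k = ς_i σ ∈ Z0
          have : k = (Pi.single i σ : Fin d → ℤ) := by rw [hk1, hC, zero_add]
          exact Set.mem_iUnion.mpr ⟨0, this ▸ single_mem_stdZ0 i hσS⟩
        · obtain ⟨j, hj⟩ := Function.ne_iff.mp hC
          have hκ1i : κ1 i = 0 := by simp [hκ1, hkiσ]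
          have hji : j ≠ i := by
            intro h; rw [h, hκ1i] at hj; exact hj rfl
          have hκ1j : κ1 j = k j := by
            simp [hκ1, Pi.single_eq_of_ne hji]
          have hkj : k j ≠ 0 := by rw [← hκ1j]; simpa using hj
          set τ : ℤ := if 0 < k j then 1 else -1 with hτ
          have hcasej : (τ = 1 ∧ 0 < k j) ∨ (τ = -1 ∧ k j < 0) := by
            rcases lt_or_gt_of_ne hkj with h | h
            · right; exact ⟨if_neg (by omega), h⟩
            · left; exact ⟨if_pos h, h⟩
          have hτS : S τ := by
            rcases hcasej with ⟨h1, _⟩ | ⟨h1, _⟩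
            · exact Or.inl h1
            · exact Or.inr (Or.inl h1)
          have hjge : 1 ≤ (k j).natAbs := by
            rcases hcasej with ⟨_, h2⟩ | ⟨_, h2⟩ <;> omega
          have habsj : (k j - τ).natAbs = (k j).natAbs - 1 := by
            rcases hcasej with ⟨h1, h2⟩ | ⟨h1, h2⟩ <;> omega
          have hjle : (k i).natAbs + (k j).natAbs ≤ N := by
            rw [← hN, ← Finset.add_sum_erase _ (fun j => (k j).natAbs) (Finset.mem_univ i)]
            have : (k j).natAbs ≤ ∑ x ∈ Finset.univ.erase i, (k x).natAbs :=
              Finset.single_le_sum (f := fun j => (k j).natAbs)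
                (fun _ _ => Nat.zero_le _) (Finset.mem_erase.mpr ⟨hji, Finset.mem_univ j⟩)
            omega
          set κ' : Fin d → ℤ := k - Pi.single j τ with hκ'
          have hk' : k = κ' + (Pi.single j τ : Fin d → ℤ) := by rw [hκ']; ring
          have hpk' : pairing c k = pairing c κ' + c j * τ := by
            have h := pairing_add_single c κ' j τ
            rw [← hk'] at h; exact h
          have hN' : (∑ x, (κ' x).natAbs) + (k j).natAbs = N + (k j - τ).natAbs :=
            hN ▸ Nm_sub_single k j τ
          by_cases hD : pairing c κ' = 0
          · -- c j * τ = pairing c k; do the double move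
            have hcjτ : c j * τ = pairing c k := by rw [hpk', hD]; ring
            set κ2 : Fin d → ℤ := k - Pi.single i (2 * σ) with hκ2
            have hk2 : k = κ2 + (Pi.single i (2 * σ) : Fin d → ℤ) := by rw [hκ2]; ring
            have hp2 : pairing c κ2 = - pairing c k := by
              have h := pairing_add_single c κ2 i (2 * σ)
              rw [← hk2] at h
              push_cast at h
              nlinarith [hciσ, h]
            set κ3 : Fin d → ℤ := κ2 - Pi.single j τ with hκ3
            have hk3 : κ2 = κ3 + (Pi.single j τ : Fin d → ℤ) := by rw [hκ3]; ring
            have hp3 : pairing c κ3 = - 2 * pairing c k := by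
              have h := pairing_add_single c κ3 j τ
              rw [← hk3] at h
              nlinarith [hcjτ, h, hp2]
            -- norms
            have habs2 : (k i - 2 * σ).natAbs = 1 := by
              rcases hcase with ⟨h1, h2⟩ | ⟨h1, h2⟩ <;> omega
            have hiabs : (k i).natAbs = 1 := by omega
            have hN2 : (∑ x, (κ2 x).natAbs) + (k i).natAbs = N + (k i - 2 * σ).natAbs :=
              hN ▸ Nm_sub_single k i (2 * σ)
            have hκ2j : κ2 j = k j := by
              simp [hκ2, Pi.single_eq_of_ne hji]
            have hN3 : (∑ x, (κ3 x).natAbs) + (κ2 j).natAbs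
                = (∑ x, (κ2 x).natAbs) + (κ2 j - τ).natAbs := Nm_sub_single κ2 j τ
            rw [hκ2j] at hN3
            have hκ3mem : κ3 ∈ Zinf kk c (stdZ0 d) :=
              IH (∑ x, (κ3 x).natAbs) (by omega) κ3 rfl
                (by rw [hp3]; intro h; exact hp (by linarith))
            have hκ2mem : κ2 ∈ Zinf kk c (stdZ0 d) := by
              rw [hk3]
              exact Zinf_step hκ3mem (single_mem_L hk j hτS)
                (by rw [← hk3, hp2]; simpa using hp)
            rw [hk2]
            exact Zinf_step hκ2mem (single_mem_L hk i h2σS) (by rw [← hk2]; exact hp)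
          · have hκ'mem : κ' ∈ Zinf kk c (stdZ0 d) :=
              IH (∑ x, (κ' x).natAbs) (by omega) κ' rfl hD
            rw [hk']
            exact Zinf_step hκ'mem (single_mem_L hk j hτS) (by rw [← hk']; exact hp)
    · have hκ1mem : κ1 ∈ Zinf kk c (stdZ0 d) :=
        IH (∑ j, (κ1 j).natAbs) (by omega) κ1 rfl hA
      rw [hk1]
      exact Zinf_step hκ1mem (single_mem_L hk i hσS) (by rw [← hk1]; exact hp)


/-- Corollary 1.7(i): if `𝒵₀ = {ς_i, −ς_i, 2ς_i, −2ς_i}` and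
`c_j = 0` for all `j = 1, …, 𝕜 − 1` (monomial flux `A_i(u) = c_{i,𝕜} u^𝕜`), then
the Hörmander-type condition holds: `ℤ^d \ 𝒵_∞ ⊆ A^⊥`, where here
`A^⊥ = {k : ⟨c_𝕜, k⟩ = 0}`. -/
theorem statement3 {d kk : ℕ} (hd : 1 ≤ d) (hk : 2 ≤ kk)
    (c : ℕ → Fin d → ℝ) (hmono : ∀ j : ℕ, 1 ≤ j → j < kk → c j = 0)
    (Z0 : Set (Fin d → ℤ)) (hZ0 : Z0 = stdZ0 d) :
    Aperp kk c = {k : Fin d → ℤ | pairing (c kk) k = 0} ∧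
    ∀ k : Fin d → ℤ, k ∉ Zinf kk (c kk) Z0 → k ∈ Aperp kk c := by

  have hAe : Aperp kk c = {k : Fin d → ℤ | pairing (c kk) k = 0} := by
    ext k
    constructor
    · intro h
      exact h kk (by omega) le_rfl
    · intro h j hj1 hjk
      rcases eq_or_lt_of_le hjk with h' | h'
      · rw [h']; exact h
      · rw [hmono j hj1 h']
        simp [pairing]
  refine ⟨hAe, fun k hkZ => ?_⟩
  rw [hAe]
  by_contra hp
  exact hkZ (hZ0 ▸ main_lemma hk (c kk) _ k rfl hp)
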